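/- arXiv:2202.10817 — 3 statements merged into one kernel-verified Lean document; each statement's English description precedes it below -/
import Mathlib

section
/- Let Σ_r be an n×n symmetric positive definite matrix, Σ_x an m×m symmetric positive definite matrix, Σ_rx an n×m real matrix, and γ > 0. Then for every real m×n matrix A, Tr(A Σ_rx) − (γ/2) Tr(Σ_x A Σ_r A') ≤ (1/(2γ)) Tr(Σ_x^{-1} Σ_rx' Σ_r^{-1} Σ_rx), with equality if and only if A = γ^{-1} Σ_x^{-1} Σ_rx' Σ_r^{-1}. In particular, the objective Tr(A Σ_rx) − (γ/2) Tr(Σ_x A Σ_r A') is maximized at A = γ^{-1} Σ_x^{-1} Σ_rx' Σ_r^{-1}. -/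
/-!
Completing the square. Since `Sx` and `Sr` are symmetric, `q(X, Y) = Tr(Sx X Sr Yᵀ)` is a
symmetric bilinear form, and `q(A, M) = Tr(A Srx)` for `M = Sx⁻¹ Srxᵀ Sr⁻¹`. Hence the objective
equals `(1/(2γ)) Tr(M Srx) - (γ/2) q(A - γ⁻¹ M, A - γ⁻¹ M)`. Writing `Sx = YᵀY` and `Sr = ZZᵀ`
with `Y`, `Z` invertible, `q(B, B) = Tr(N Nᵀ)` for `N = Y B Z`, which is nonnegative and
vanishes only when `B = 0`.
-/

open Matrix

namespace Matrix

section Positivity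

variable {𝕜 : Type*} [RCLike 𝕜] {m n : Type*} [Fintype m] [Fintype n]

open scoped ComplexOrder MatrixOrder

lemma trace_conjTranspose_mul_self_mul_mul_conjTranspose_eq (Y : Matrix m m 𝕜)
    (B : Matrix m n 𝕜) (Z : Matrix n n 𝕜) :
    (Yᴴ * Y * B * (Z * Zᴴ) * Bᴴ).trace = (Y * B * Z * (Y * B * Z)ᴴ).trace := by
  simp only [conjTranspose_mul, Matrix.mul_assoc]
  rw [trace_mul_comm]
  simp only [Matrix.mul_assoc]

lemma trace_mul_mul_mul_conjTranspose_nonneg {P : Matrix m m 𝕜} {Q : Matrix n n 𝕜}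
    (hP : P.PosSemidef) (hQ : Q.PosSemidef) (B : Matrix m n 𝕜) :
    0 ≤ (P * B * Q * Bᴴ).trace := by
  classical
  obtain ⟨Y, rfl⟩ := CStarAlgebra.nonneg_iff_eq_star_mul_self.mp hP.nonneg
  obtain ⟨Z, rfl⟩ := CStarAlgebra.nonneg_iff_eq_mul_star_self.mp hQ.nonneg
  rw [star_eq_conjTranspose, star_eq_conjTranspose,
    trace_conjTranspose_mul_self_mul_mul_conjTranspose_eq]
  exact (posSemidef_self_mul_conjTranspose _).trace_nonneg

lemma trace_mul_mul_mul_conjTranspose_eq_zero_iff [DecidableEq m] [DecidableEq n]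
    {P : Matrix m m 𝕜} {Q : Matrix n n 𝕜} (hP : P.PosDef) (hQ : Q.PosDef) (B : Matrix m n 𝕜) :
    (P * B * Q * Bᴴ).trace = 0 ↔ B = 0 := by
  obtain ⟨Y, hY, rfl⟩ := CStarAlgebra.isStrictlyPositive_iff_eq_star_mul_self.mp
    hP.isStrictlyPositive
  obtain ⟨Z, hZ, rfl⟩ := CStarAlgebra.isStrictlyPositive_iff_eq_mul_star_self.mp
    hQ.isStrictlyPositive
  rw [star_eq_conjTranspose, star_eq_conjTranspose,
    trace_conjTranspose_mul_self_mul_mul_conjTranspose_eq,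
    trace_mul_conjTranspose_self_eq_zero_iff]
  let := hY.invertible
  let := hZ.invertible
  have hinj : Function.Injective fun C : Matrix m n 𝕜 ↦ Y * C * Z :=
    (mul_left_injective_of_invertible Z).comp (mul_right_injective_of_invertible Y)
  exact hinj.eq_iff' (by simp)

end Positivity

section Quadratic

variable {m n : Type*} [Fintype m] [Fintype n]

section CommRing

variable {K : Type*} [CommRing K] {P : Matrix m m K} {Q : Matrix n n K}

lemma trace_mul_mul_mul_transpose_comm (hP : P.IsSymm) (hQ : Q.IsSymm) (X Y : Matrix m n K) :
    (P * X * Q * Yᵀ).trace = (P * Y * Q * Xᵀ).trace := by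
  rw [← trace_transpose]
  simp only [transpose_mul, transpose_transpose, hP.eq, hQ.eq, ← Matrix.mul_assoc]
  exact (trace_mul_comm _ P).trans (by simp only [Matrix.mul_assoc])

lemma trace_mul_sub_smul_mul_transpose_sub_smul (hP : P.IsSymm) (hQ : Q.IsSymm)
    (X Y : Matrix m n K) (c : K) :
    (P * (X - c • Y) * Q * (X - c • Y)ᵀ).trace
      = (P * X * Q * Xᵀ).trace - 2 * c * (P * X * Q * Yᵀ).trace
        + c ^ 2 * (P * Y * Q * Yᵀ).trace := by
  simp only [transpose_sub, transpose_smul, Matrix.mul_sub, Matrix.sub_mul, Matrix.mul_smul,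
    Matrix.smul_mul, trace_sub, trace_smul, smul_eq_mul,
    trace_mul_mul_mul_transpose_comm hP hQ Y X]
  ring

lemma trace_mul_mul_mul_transpose_inv_mul_transpose_mul_inv [DecidableEq m] [DecidableEq n]
    (hP : P.IsSymm) (hQ : Q.IsSymm) (hPdet : IsUnit P.det) (hQdet : IsUnit Q.det)
    (X : Matrix m n K) (S : Matrix n m K) :
    (P * X * Q * (P⁻¹ * Sᵀ * Q⁻¹)ᵀ).trace = (X * S).trace := by
  simp only [transpose_mul, transpose_nonsing_inv, transpose_transpose, hP.eq, hQ.eq]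
  rw [Matrix.mul_assoc, mul_nonsing_inv_cancel_left _ _ hQdet, ← Matrix.mul_assoc, trace_mul_comm,
    ← Matrix.mul_assoc, ← Matrix.mul_assoc, nonsing_inv_mul _ hPdet, Matrix.one_mul]

end CommRing

lemma trace_mul_sub_trace_mul_mul_mul_transpose_eq {K : Type*} [Field K] [CharZero K]
    [DecidableEq m] [DecidableEq n] {P : Matrix m m K} {Q : Matrix n n K}
    (hP : P.IsSymm) (hQ : Q.IsSymm) (hPdet : IsUnit P.det) (hQdet : IsUnit Q.det)
    (S : Matrix n m K) {γ : K} (hγ : γ ≠ 0) (X : Matrix m n K) :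
    (X * S).trace - γ / 2 * (P * X * Q * Xᵀ).trace
      = 1 / (2 * γ) * (P⁻¹ * Sᵀ * Q⁻¹ * S).trace
        - γ / 2 * (P * (X - γ⁻¹ • (P⁻¹ * Sᵀ * Q⁻¹)) * Q * (X - γ⁻¹ • (P⁻¹ * Sᵀ * Q⁻¹))ᵀ).trace := by
  rw [trace_mul_sub_smul_mul_transpose_sub_smul hP hQ,
    trace_mul_mul_mul_transpose_inv_mul_transpose_mul_inv hP hQ hPdet hQdet,
    trace_mul_mul_mul_transpose_inv_mul_transpose_mul_inv hP hQ hPdet hQdet]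
  field_simp
  ring

end Quadratic

end Matrix

/-- for SPD `Sr`, `Sx`, any `Srx` and `γ > 0`, the objective
`Tr(A Srx) − (γ/2) Tr(Sx A Sr A')` is bounded by `(1/(2γ)) Tr(Sx⁻¹ Srx' Sr⁻¹ Srx)`,
with equality iff `A = γ⁻¹ Sx⁻¹ Srx' Sr⁻¹`. -/
theorem approx_mean_variance_optimum {n m : ℕ}
    (Sr : Matrix (Fin n) (Fin n) ℝ) (Sx : Matrix (Fin m) (Fin m) ℝ)
    (hr : Sr.PosDef) (hx : Sx.PosDef)
    (Srx : Matrix (Fin n) (Fin m) ℝ) (γ : ℝ) (hγ : 0 < γ)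
    (A : Matrix (Fin m) (Fin n) ℝ) :
    (A * Srx).trace - γ / 2 * (Sx * A * Sr * Aᵀ).trace
      ≤ 1 / (2 * γ) * (Sx⁻¹ * Srxᵀ * Sr⁻¹ * Srx).trace ∧
    ((A * Srx).trace - γ / 2 * (Sx * A * Sr * Aᵀ).trace
        = 1 / (2 * γ) * (Sx⁻¹ * Srxᵀ * Sr⁻¹ * Srx).trace
      ↔ A = γ⁻¹ • (Sx⁻¹ * Srxᵀ * Sr⁻¹)) := by
  rw [trace_mul_sub_trace_mul_mul_mul_transpose_eq (isHermitian_iff_isSymm.mp hx.isHermitian)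
    (isHermitian_iff_isSymm.mp hr.isHermitian) ((isUnit_iff_isUnit_det _).mp hx.isUnit)
    ((isUnit_iff_isUnit_det _).mp hr.isUnit) Srx hγ.ne' A]
  set B := A - γ⁻¹ • (Sx⁻¹ * Srxᵀ * Sr⁻¹) with hB
  have hB_nonneg : 0 ≤ (Sx * B * Sr * Bᵀ).trace := by
    simpa only [conjTranspose_eq_transpose_of_trivial] using
      trace_mul_mul_mul_conjTranspose_nonneg hx.posSemidef hr.posSemidef B
  have hB_zero : (Sx * B * Sr * Bᵀ).trace = 0 ↔ B = 0 := by
    simpa only [conjTranspose_eq_transpose_of_trivial] using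
      trace_mul_mul_mul_conjTranspose_eq_zero_iff hx hr B
  refine ⟨sub_le_self _ (mul_nonneg (by positivity) hB_nonneg), ?_⟩
  rw [sub_eq_self, mul_eq_zero, or_iff_right (by positivity), hB_zero, hB, sub_eq_zero]
end

section
/- Fix an integer N ≥ 1, reals 0 ≤ s₁, …, s_N ≤ 1, and γ > 0, and let D = Diag(s₁, …, s_N). Then for every real N×N matrix L, Tr(L D) − (γ/2)(Tr(L L') + Tr(D L D L)) ≤ (1/(2γ)) Σ_{i=1}^N s_i²/(1 + s_i²), and this bound is attained at L* = Diag(s₁/(γ(1+s₁²)), …, s_N/(γ(1+s_N²))). -/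
open Matrix

/-- with `D = Diag(s₁,…,s_N)`, `0 ≤ sᵢ ≤ 1`, `γ > 0`, for every `L`,
`Tr(L D) − (γ/2)(Tr(L L') + Tr(D L D L)) ≤ (1/(2γ)) Σᵢ sᵢ²/(1+sᵢ²)`,
with the bound attained at `L* = Diag(sᵢ/(γ(1+sᵢ²)))`. -/
theorem diagonal_objective_optimum {N : ℕ} (hN : 1 ≤ N)
    (s : Fin N → ℝ) (hs : ∀ i, 0 ≤ s i ∧ s i ≤ 1) (γ : ℝ) (hγ : 0 < γ) :
    (∀ L : Matrix (Fin N) (Fin N) ℝ,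
      (L * diagonal s).trace
          - γ / 2 * ((L * Lᵀ).trace + (diagonal s * L * diagonal s * L).trace)
        ≤ 1 / (2 * γ) * ∑ i, (s i) ^ 2 / (1 + (s i) ^ 2)) ∧
    ((diagonal (fun i => s i / (γ * (1 + (s i) ^ 2))) * diagonal s).trace
        - γ / 2 * ((diagonal (fun i => s i / (γ * (1 + (s i) ^ 2)))
              * (diagonal (fun i => s i / (γ * (1 + (s i) ^ 2))))ᵀ).trace
            + (diagonal s * diagonal (fun i => s i / (γ * (1 + (s i) ^ 2)))
              * diagonal s * diagonal (fun i => s i / (γ * (1 + (s i) ^ 2)))).trace)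
      = 1 / (2 * γ) * ∑ i, (s i) ^ 2 / (1 + (s i) ^ 2)) := by
  have ha : ∀ i, (0:ℝ) < 1 + (s i) ^ 2 := fun i => by nlinarith [sq_nonneg (s i)]
  have hRHS : (1 / (2 * γ) * ∑ i, (s i) ^ 2 / (1 + (s i) ^ 2))
      = ∑ i, (s i) ^ 2 / (2 * γ * (1 + (s i) ^ 2)) := by
    rw [Finset.mul_sum]
    refine Finset.sum_congr rfl fun i _ => ?_
    field_simp
  constructor
  · intro L
    have tr1 : (L * diagonal s).trace = ∑ i, L i i * s i := by
      simp [Matrix.trace, Matrix.diag, mul_diagonal]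
    have tr2 : (L * Lᵀ).trace = ∑ i, ∑ j, L i j ^ 2 := by
      simp [Matrix.trace, Matrix.diag, mul_apply, sq]
    have tr3 : (diagonal s * L * diagonal s * L).trace
        = ∑ i, ∑ j, s i * L i j * (s j * L j i) := by
      have h : diagonal s * L * diagonal s = of (fun i j => s i * L i j * s j) := by
        ext i j
        simp [mul_diagonal, diagonal_mul]
      rw [h]
      simp [Matrix.trace, Matrix.diag, mul_apply, mul_assoc]
    rw [tr1, tr2, tr3, hRHS]
    -- symmetrize the quadratic form
    have hsym : (∑ i, ∑ j, L i j ^ 2) + ∑ i, ∑ j, s i * L i j * (s j * L j i)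
        = ∑ i, ∑ j, ((L i j ^ 2 + L j i ^ 2) / 2 + s i * L i j * (s j * L j i)) := by
      have hsw : ∑ i, ∑ j, (L j i : ℝ) ^ 2 = ∑ i, ∑ j, L i j ^ 2 := Finset.sum_comm
      calc (∑ i, ∑ j, L i j ^ 2) + ∑ i, ∑ j, s i * L i j * (s j * L j i)
          = ((∑ i, ∑ j, L i j ^ 2) + ∑ i, ∑ j, L j i ^ 2) / 2
              + ∑ i, ∑ j, s i * L i j * (s j * L j i) := by rw [hsw]; ring
        _ = ∑ i, ∑ j, ((L i j ^ 2 + L j i ^ 2) / 2 + s i * L i j * (s j * L j i)) := by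
            simp [Finset.sum_add_distrib, Finset.sum_div, add_div]
    -- lower bound the symmetrized form by its diagonal part
    have hlow : ∑ i, (1 + (s i) ^ 2) * (L i i) ^ 2
        ≤ ∑ i, ∑ j, ((L i j ^ 2 + L j i ^ 2) / 2 + s i * L i j * (s j * L j i)) := by
      have : ∀ i : Fin N, (1 + (s i) ^ 2) * (L i i) ^ 2
          = ∑ j, (if j = i then (1 + (s i) ^ 2) * (L i i) ^ 2 else 0) := by
        intro i; rw [Finset.sum_ite_eq' Finset.univ i]; simp
      calc ∑ i, (1 + (s i) ^ 2) * (L i i) ^ 2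
          = ∑ i, ∑ j, (if j = i then (1 + (s i) ^ 2) * (L i i) ^ 2 else 0) := by
            exact Finset.sum_congr rfl fun i _ => this i
        _ ≤ _ := by
            refine Finset.sum_le_sum fun i _ => Finset.sum_le_sum fun j _ => ?_
            by_cases hij : j = i
            · subst hij; simp; ring_nf; nlinarith [sq_nonneg (L j j)]
            · simp [hij]
              have h1 := (hs i).1
              have h2 := (hs i).2
              have h3 := (hs j).1
              have h4 := (hs j).2
              nlinarith [sq_nonneg (L i j + L j i), sq_nonneg (L i j - L j i),
                mul_nonneg h1 h3, mul_nonneg (mul_nonneg h1 h3) (sq_nonneg (L i j + L j i)),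
                mul_nonneg (sub_nonneg.2 (mul_le_one₀ h2 h3 h4)) (sq_nonneg (L i j - L j i))]
    -- combine
    have step1 : (∑ i, L i i * s i)
          - γ / 2 * ((∑ i, ∑ j, L i j ^ 2) + ∑ i, ∑ j, s i * L i j * (s j * L j i))
        ≤ ∑ i, (L i i * s i - γ / 2 * ((1 + (s i) ^ 2) * (L i i) ^ 2)) := by
      rw [hsym]
      have := mul_le_mul_of_nonneg_left hlow (le_of_lt (by positivity : (0:ℝ) < γ / 2))
      rw [Finset.sum_sub_distrib, ← Finset.mul_sum]
      linarith
    refine step1.trans (Finset.sum_le_sum fun i _ => ?_)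
    rw [le_div_iff₀ (by positivity : (0:ℝ) < 2 * γ * (1 + (s i) ^ 2))]
    nlinarith [sq_nonneg (γ * (1 + (s i) ^ 2) * L i i - s i), ha i, hγ]
  · rw [hRHS]
    simp only [diagonal_transpose, diagonal_mul_diagonal, trace_diagonal]
    rw [← Finset.sum_add_distrib, Finset.mul_sum, ← Finset.sum_sub_distrib]
    refine Finset.sum_congr rfl fun i _ => ?_
    have hai := ha i
    have hγ' := hγ.ne'
    field_simp
    ring
end

section
/- Let Σ_r and Σ_x be N×N symmetric positive definite matrices, let U and V be N×N orthogonal matrices, let D = Diag(s₁, …, s_N) with 0 ≤ s_i ≤ 1, let γ > 0, and suppose Σ_rx = Σ_r^{1/2} U D V' Σ_x^{1/2}. Then the matrix A* = Σ_x^{-1/2} V Diag(s₁/(γ(1+s₁²)), …, s_N/(γ(1+s_N²))) U' Σ_r^{-1/2} maximizes the mean–variance objective: for every real N×N matrix A, Tr(A Σ_rx) − (γ/2)(Tr(Σ_x A Σ_r A') + Tr(Σ_rx A Σ_rx A)) ≤ Tr(A* Σ_rx) − (γ/2)(Tr(Σ_x A* Σ_r A*') + Tr(Σ_rx A* Σ_rx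 A*)). -/
open Matrix

namespace Matrix.PosSemidef

open scoped ComplexOrder

/-- The positive semidefinite square root, as defined in Mathlib of December 2024. -/
noncomputable def sqrt {n : Type*} [Fintype n] [DecidableEq n] {𝕜 : Type*} [RCLike 𝕜]
    {A : Matrix n n 𝕜} (hA : A.PosSemidef) : Matrix n n 𝕜 :=
  hA.1.eigenvectorUnitary.1 * diagonal ((↑) ∘ (√·) ∘ hA.1.eigenvalues) *
  (star hA.1.eigenvectorUnitary : Matrix n n 𝕜)

end Matrix.PosSemidef

private lemma sqrt_mul_self' {N : ℕ} {A : Matrix (Fin N) (Fin N) ℝ} (hA : A.PosSemidef) :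
    Matrix.PosSemidef.sqrt hA * Matrix.PosSemidef.sqrt hA = A := by
  have hu : (star hA.1.eigenvectorUnitary : Matrix (Fin N) (Fin N) ℝ)
      * hA.1.eigenvectorUnitary.1 = 1 := Unitary.coe_star_mul_self _
  have hD : diagonal ((RCLike.ofReal ∘ (√·) ∘ hA.1.eigenvalues) : Fin N → ℝ)
      * diagonal (RCLike.ofReal ∘ (√·) ∘ hA.1.eigenvalues)
      = diagonal (RCLike.ofReal ∘ hA.1.eigenvalues) := by
    rw [diagonal_mul_diagonal]
    congr 1; funext i
    simp [Real.mul_self_sqrt (hA.eigenvalues_nonneg i)]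
  unfold Matrix.PosSemidef.sqrt
  conv_rhs => rw [hA.1.spectral_theorem]
  rw [Unitary.conjStarAlgAut_apply, ← hD]
  simp only [Matrix.mul_assoc]
  rw [← Matrix.mul_assoc (star _ : Matrix (Fin N) (Fin N) ℝ), hu, Matrix.one_mul]

private lemma sqrt_transpose' {N : ℕ} {A : Matrix (Fin N) (Fin N) ℝ} (hA : A.PosSemidef) :
    (Matrix.PosSemidef.sqrt hA)ᵀ = Matrix.PosSemidef.sqrt hA := by
  rw [← conjTranspose_eq_transpose_of_trivial]
  unfold Matrix.PosSemidef.sqrt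
  rw [conjTranspose_mul, conjTranspose_mul, diagonal_conjTranspose]
  simp [Matrix.mul_assoc, star_eq_conjTranspose, conjTranspose_eq_transpose_of_trivial]

private lemma quad_bound (γ t c : ℝ) (hγ : 0 < γ) :
    t * c - γ / 2 * ((1 + t ^ 2) * c ^ 2) ≤ t ^ 2 / (2 * γ * (1 + t ^ 2)) := by
  have h1 : (0:ℝ) < 1 + t ^ 2 := by positivity
  rw [← sub_nonneg]
  have h2 : t ^ 2 / (2 * γ * (1 + t ^ 2)) - (t * c - γ / 2 * ((1 + t ^ 2) * c ^ 2))
      = (γ * (1 + t ^ 2) * c - t) ^ 2 / (2 * γ * (1 + t ^ 2)) := by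
    field_simp
    ring
  rw [h2]
  positivity

private lemma sum_diag_le {N : ℕ} (f : Fin N → Fin N → ℝ)
    (h : ∀ i j, 0 ≤ f i j + f j i) : ∑ i, f i i ≤ ∑ i, ∑ j, f i j := by
  have hdiag : ∀ i : Fin N, f i i + f i i ≤ ∑ j, (f i j + f j i) := fun i =>
    Finset.single_le_sum (f := fun j => f i j + f j i) (fun j _ => h i j)
      (Finset.mem_univ i)
  have h1 : ∑ i, ∑ j, (f i j + f j i) = 2 * ∑ i, ∑ j, f i j := by
    have hc : ∑ i : Fin N, ∑ j : Fin N, f j i = ∑ i : Fin N, ∑ j : Fin N, f i j :=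
      Finset.sum_comm
    simp only [Finset.sum_add_distrib]
    rw [hc]; ring
  have h2 : ∑ i, (f i i + f i i) ≤ ∑ i, ∑ j, (f i j + f j i) :=
    Finset.sum_le_sum fun i _ => hdiag i
  have h3 : ∑ i, (f i i + f i i) = 2 * ∑ i, f i i := by
    rw [Finset.mul_sum]; exact Finset.sum_congr rfl fun i _ => by ring
  linarith [h1 ▸ h3 ▸ h2]

private lemma key_ineq {N : ℕ} (s : Fin N → ℝ) (hs : ∀ i, 0 ≤ s i ∧ s i ≤ 1)
    (γ : ℝ) (hγ : 0 < γ) (C : Matrix (Fin N) (Fin N) ℝ) :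
    (C * diagonal s).trace
      - γ / 2 * ((C * Cᵀ).trace + (diagonal s * C * diagonal s * C).trace)
      ≤ ∑ i, (s i) ^ 2 / (2 * γ * (1 + (s i) ^ 2)) := by
  classical
  have ht1 : (C * diagonal s).trace = ∑ i, C i i * s i := by
    simp [Matrix.trace, Matrix.diag, Matrix.mul_diagonal]
  have ht2 : (C * Cᵀ).trace = ∑ i, ∑ j, C i j ^ 2 := by
    simp [Matrix.trace, Matrix.diag, Matrix.mul_apply, sq]
  have ht3 : (diagonal s * C * diagonal s * C).trace
      = ∑ i, ∑ j, s i * C i j * (s j * C j i) := by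
    have h : diagonal s * C * diagonal s * C = (diagonal s * C) * (diagonal s * C) :=
      Matrix.mul_assoc _ _ _
    have hd : ∀ i j, (diagonal s * C) i j = s i * C i j := fun i j =>
      Matrix.diagonal_mul _ _ _ _
    rw [h]
    simp only [Matrix.trace, Matrix.diag, Matrix.mul_apply, hd]
  have hpair : ∀ i j : Fin N,
      0 ≤ (C i j ^ 2 + s i * C i j * (s j * C j i))
        + (C j i ^ 2 + s j * C j i * (s i * C i j)) := by
    intro i j
    have ht0 : 0 ≤ s i * s j := mul_nonneg (hs i).1 (hs j).1
    have ht1' : s i * s j ≤ 1 := mul_le_one₀ (hs i).2 (hs j).1 (hs j).2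
    nlinarith [mul_nonneg (by linarith : (0:ℝ) ≤ 1 - s i * s j)
        (by positivity : (0:ℝ) ≤ C i j ^ 2 + C j i ^ 2),
      mul_nonneg ht0 (sq_nonneg (C i j + C j i))]
  have hsum : ∑ i, (C i i ^ 2 + s i * C i i * (s i * C i i))
      ≤ ∑ i, ∑ j, (C i j ^ 2 + s i * C i j * (s j * C j i)) :=
    sum_diag_le (fun i j => C i j ^ 2 + s i * C i j * (s j * C j i)) hpair
  rw [ht1, ht2, ht3]
  have hfe : ∑ i, ∑ j, C i j ^ 2 + ∑ i, ∑ j, s i * C i j * (s j * C j i)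
      = ∑ i, ∑ j, (C i j ^ 2 + s i * C i j * (s j * C j i)) := by
    rw [← Finset.sum_add_distrib]
    exact Finset.sum_congr rfl fun i _ => by rw [← Finset.sum_add_distrib]
  calc (∑ i, C i i * s i)
        - γ / 2 * (∑ i, ∑ j, C i j ^ 2 + ∑ i, ∑ j, s i * C i j * (s j * C j i))
      = (∑ i, C i i * s i)
        - γ / 2 * (∑ i, ∑ j, (C i j ^ 2 + s i * C i j * (s j * C j i))) := by rw [hfe]
    _ ≤ (∑ i, C i i * s i)
        - γ / 2 * (∑ i, (C i i ^ 2 + s i * C i i * (s i * C i i))) := by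
        have := mul_le_mul_of_nonneg_left hsum (by positivity : (0:ℝ) ≤ γ / 2)
        linarith
    _ = ∑ i, (C i i * s i - γ / 2 * (C i i ^ 2 + s i * C i i * (s i * C i i))) := by
        rw [Finset.mul_sum, ← Finset.sum_sub_distrib]
    _ ≤ ∑ i, (s i) ^ 2 / (2 * γ * (1 + (s i) ^ 2)) := by
        refine Finset.sum_le_sum fun i _ => ?_
        have hq := quad_bound γ (s i) (C i i) hγ
        have heq : C i i * s i - γ / 2 * (C i i ^ 2 + s i * C i i * (s i * C i i))
            = s i * C i i - γ / 2 * ((1 + s i ^ 2) * C i i ^ 2) := by ring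
        rw [heq]; exact hq

/-- with `Sr`, `Sx` SPD, `U`, `V` orthogonal, `D = Diag(s)` with `0 ≤ sᵢ ≤ 1`,
`γ > 0`, and `Srx = Sr^{1/2} U D V' Sx^{1/2}`, the matrix
`A* = Sx^{-1/2} V Diag(sᵢ/(γ(1+sᵢ²))) U' Sr^{-1/2}` maximizes the full mean–variance
objective `Tr(A Srx) − (γ/2)(Tr(Sx A Sr A') + Tr(Srx A Srx A))`. -/
theorem full_mean_variance_optimum {N : ℕ}
    (Sr Sx : Matrix (Fin N) (Fin N) ℝ) (hr : Sr.PosDef) (hx : Sx.PosDef)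
    (U V : Matrix (Fin N) (Fin N) ℝ) (hU : Uᵀ * U = 1) (hV : Vᵀ * V = 1)
    (s : Fin N → ℝ) (hs : ∀ i, 0 ≤ s i ∧ s i ≤ 1)
    (γ : ℝ) (hγ : 0 < γ)
    (Srx : Matrix (Fin N) (Fin N) ℝ)
    (hSrx : Srx = (Matrix.PosSemidef.sqrt hr.posSemidef) * U * diagonal s * Vᵀ * (Matrix.PosSemidef.sqrt hx.posSemidef))
    (Astar : Matrix (Fin N) (Fin N) ℝ)
    (hAstar : Astar = (Matrix.PosSemidef.sqrt hx.posSemidef)⁻¹ * V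
        * diagonal (fun i => s i / (γ * (1 + (s i) ^ 2))) * Uᵀ * (Matrix.PosSemidef.sqrt hr.posSemidef)⁻¹) :
    ∀ A : Matrix (Fin N) (Fin N) ℝ,
      (A * Srx).trace
          - γ / 2 * ((Sx * A * Sr * Aᵀ).trace + (Srx * A * Srx * A).trace)
        ≤ (Astar * Srx).trace
          - γ / 2 * ((Sx * Astar * Sr * Astarᵀ).trace
              + (Srx * Astar * Srx * Astar).trace) := by
  classical
  set R := Matrix.PosSemidef.sqrt hr.posSemidef with hRdef
  set X := Matrix.PosSemidef.sqrt hx.posSemidef with hXdef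
  set D := diagonal s with hDdef
  set Λ := diagonal (fun i => s i / (γ * (1 + (s i) ^ 2))) with hΛdef
  have hRR : R * R = Sr := sqrt_mul_self' hr.posSemidef
  have hXX : X * X = Sx := sqrt_mul_self' hx.posSemidef
  have hRt : Rᵀ = R := by
    exact sqrt_transpose' hr.posSemidef
  have hXt : Xᵀ = X := by
    exact sqrt_transpose' hx.posSemidef
  have hRdet : IsUnit R.det := by
    have h : R.det * R.det = Sr.det := by rw [← det_mul, hRR]
    refine isUnit_iff_ne_zero.2 fun h0 => ?_
    rw [h0, mul_zero] at h
    exact absurd h.symm (ne_of_gt hr.det_pos)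
  have hXdet : IsUnit X.det := by
    have h : X.det * X.det = Sx.det := by rw [← det_mul, hXX]
    refine isUnit_iff_ne_zero.2 fun h0 => ?_
    rw [h0, mul_zero] at h
    exact absurd h.symm (ne_of_gt hx.det_pos)
  have hUU : U * Uᵀ = 1 := mul_eq_one_comm.mp hU
  have hVV : V * Vᵀ = 1 := mul_eq_one_comm.mp hV
  have cXXi : ∀ M : Matrix (Fin N) (Fin N) ℝ, X * (X⁻¹ * M) = M := fun M => by
    rw [← Matrix.mul_assoc, Matrix.mul_nonsing_inv _ hXdet, Matrix.one_mul]
  have cRiR : ∀ M : Matrix (Fin N) (Fin N) ℝ, R⁻¹ * (R * M) = M := fun M => by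
    rw [← Matrix.mul_assoc, Matrix.nonsing_inv_mul _ hRdet, Matrix.one_mul]
  have cVtV : ∀ M : Matrix (Fin N) (Fin N) ℝ, Vᵀ * (V * M) = M := fun M => by
    rw [← Matrix.mul_assoc, hV, Matrix.one_mul]
  have cUUt : ∀ M : Matrix (Fin N) (Fin N) ℝ, U * (Uᵀ * M) = M := fun M => by
    rw [← Matrix.mul_assoc, hUU, Matrix.one_mul]
  have main : ∀ B : Matrix (Fin N) (Fin N) ℝ,
      (B * Srx).trace - γ / 2 * ((Sx * B * Sr * Bᵀ).trace + (Srx * B * Srx * B).trace)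
        = ((Vᵀ * (X * B * R) * U) * D).trace
          - γ / 2 * (((Vᵀ * (X * B * R) * U) * (Vᵀ * (X * B * R) * U)ᵀ).trace
            + (D * (Vᵀ * (X * B * R) * U) * D * (Vᵀ * (X * B * R) * U)).trace) := by
    intro B
    set C := Vᵀ * (X * B * R) * U with hC
    have hCT : Cᵀ = Uᵀ * (R * Bᵀ * X) * V := by
      rw [hC]
      simp only [Matrix.transpose_mul, Matrix.transpose_transpose, hRt, hXt,
        Matrix.mul_assoc]
    have e1 : (B * Srx).trace = (C * D).trace := by
      have a1 : B * Srx = (B * R * U * D * Vᵀ) * X := by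
        rw [hSrx]; simp only [Matrix.mul_assoc]
      have a2 : X * (B * R * U * D * Vᵀ) = (X * B * R * U * D) * Vᵀ := by
        simp only [Matrix.mul_assoc]
      have a3 : Vᵀ * (X * B * R * U * D) = C * D := by
        rw [hC]; simp only [Matrix.mul_assoc]
      rw [a1, Matrix.trace_mul_comm, a2, Matrix.trace_mul_comm, a3]
    have e2 : (Sx * B * Sr * Bᵀ).trace = (C * Cᵀ).trace := by
      have b1 : Sx * B * Sr * Bᵀ = X * (X * B * R * (R * Bᵀ)) := by
        rw [← hXX, ← hRR]; simp only [Matrix.mul_assoc]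
      have b2 : (X * B * R * (R * Bᵀ)) * X = X * B * R * (R * Bᵀ * X) := by
        simp only [Matrix.mul_assoc]
      have b3 : C * Cᵀ = Vᵀ * ((X * B * R * (R * Bᵀ * X)) * V) := by
        rw [hC, hCT]
        simp only [Matrix.mul_assoc, cUUt]
      have b4 : ((X * B * R * (R * Bᵀ * X)) * V) * Vᵀ
          = (X * B * R * (R * Bᵀ * X)) * (V * Vᵀ) := Matrix.mul_assoc _ _ _
      have b5 : (C * Cᵀ).trace = (X * B * R * (R * Bᵀ * X)).trace := by
        rw [b3, Matrix.trace_mul_comm, b4, hVV, Matrix.mul_one]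
      rw [b1, Matrix.trace_mul_comm, b2]
      exact b5.symm
    have e3 : (Srx * B * Srx * B).trace = (D * C * D * C).trace := by
      have c1 : Srx * B * Srx * B
          = (R * U) * (D * (Vᵀ * (X * (B * (R * (U * (D * (Vᵀ * (X * B))))))))) := by
        rw [hSrx]; simp only [Matrix.mul_assoc]
      have c2 : (D * (Vᵀ * (X * (B * (R * (U * (D * (Vᵀ * (X * B))))))))) * (R * U)
          = D * C * D * C := by
        rw [hC]; simp only [Matrix.mul_assoc]
      rw [c1, Matrix.trace_mul_comm, c2]
    rw [e1, e2, e3]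
  have hCAstar : Vᵀ * (X * Astar * R) * U = Λ := by
    rw [hAstar]
    simp only [Matrix.mul_assoc]
    rw [cXXi, cVtV]
    rw [show Uᵀ * (R⁻¹ * (R * U)) = Uᵀ * U from by rw [cRiR], hU, Matrix.mul_one]
  intro A
  rw [main Astar, hCAstar, main A]
  have hrhs : (Λ * D).trace
      - γ / 2 * ((Λ * Λᵀ).trace + (D * Λ * D * Λ).trace)
      = ∑ i, (s i) ^ 2 / (2 * γ * (1 + (s i) ^ 2)) := by
    rw [hΛdef, hDdef]
    simp only [Matrix.diagonal_transpose, Matrix.diagonal_mul_diagonal,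
      Matrix.trace_diagonal]
    rw [← Finset.sum_add_distrib, Finset.mul_sum, ← Finset.sum_sub_distrib]
    refine Finset.sum_congr rfl fun i _ => ?_
    have h1 : (0:ℝ) < 1 + s i ^ 2 := by positivity
    field_simp
    ring
  rw [hrhs]
  exact key_ineq s hs γ hγ _
end
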